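/- arXiv:math/0206195 — 3 statements merged into one kernel-verified Lean document; each statement's English description precedes it below -/
import Mathlib

section
/- Let R be a ring and Z a class of R-modules. Then g(Z) = lr(Z) if and only if g(Z) is closed under extensions; i.e., the class of modules generated by Z equals the smallest torsion class containing Z if and only if the class of modules generated by Z is closed under extensions. -/
universe u v

/-- `l(Z)`: the class of modules `M` with `Hom(M, Z') = 0` for all `Z' ∈ Z`. -/
def leftPerp {R : Type u} [Ring R] (Z : Set (ModuleCat.{v} R)) : Set (ModuleCat.{v} R) :=
  {M | ∀ Z' ∈ Z, ∀ f : M →ₗ[R] Z', f = 0}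

/-- `r(Z)`: the class of modules `M` with `Hom(Z', M) = 0` for all `Z' ∈ Z`. -/
def rightPerp {R : Type u} [Ring R] (Z : Set (ModuleCat.{v} R)) : Set (ModuleCat.{v} R) :=
  {M | ∀ Z' ∈ Z, ∀ f : Z' →ₗ[R] M, f = 0}

/-- `g(Z)`: the class of modules generated by `Z`, i.e. epimorphic images of
direct sums of modules in `Z`. -/
def genBy {R : Type u} [Ring R] (Z : Set (ModuleCat.{v} R)) : Set (ModuleCat.{v} R) :=
  {M | ∃ (ι : Type v) (N : ι → ModuleCat.{v} R), (∀ i, N i ∈ Z) ∧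
    ∃ f : (DirectSum ι fun i => ↥(N i)) →ₗ[R] M, Function.Surjective f}

/-- A class of modules is closed under extensions if whenever a submodule and the
corresponding quotient of a module both lie in the class, so does the module. -/
def ClosedUnderExt {R : Type u} [Ring R] (X : Set (ModuleCat.{v} R)) : Prop :=
  ∀ (Y : ModuleCat.{v} R) (U : Submodule R Y),
    ModuleCat.of R U ∈ X → ModuleCat.of R (↥Y ⧸ U) ∈ X → Y ∈ X

variable {R : Type u} [Ring R]

lemma mem_genBy_of_surjective {Z : Set (ModuleCat.{v} R)} {M M' : ModuleCat.{v} R}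
    (hM : M ∈ genBy Z) (f : ↥M →ₗ[R] ↥M') (hf : Function.Surjective f) : M' ∈ genBy Z := by
  obtain ⟨ι, N, hN, g, hg⟩ := hM
  exact ⟨ι, N, hN, f ∘ₗ g, hf.comp hg⟩

lemma mem_genBy_self {Z : Set (ModuleCat.{v} R)} {Z' : ModuleCat.{v} R} (h : Z' ∈ Z) :
    Z' ∈ genBy Z := by
  refine ⟨PUnit, fun _ => Z', fun _ => h,
    DirectSum.toModule R PUnit ↥Z' (fun _ => LinearMap.id), fun x => ?_⟩
  exact ⟨DirectSum.lof R PUnit (fun _ => ↥Z') PUnit.unit x, by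
    simp [DirectSum.toModule_lof]⟩

lemma apply_mem_of_comp_range_le {ι : Type v} [DecidableEq ι] {N : ι → ModuleCat.{v} R} {M : Type v}
    [AddCommGroup M] [Module R M] (f : (DirectSum ι fun i => ↥(N i)) →ₗ[R] M)
    (T : Submodule R M)
    (hT : ∀ i, LinearMap.range (f ∘ₗ DirectSum.lof R ι (fun i => ↥(N i)) i) ≤ T)
    (x : DirectSum ι fun i => ↥(N i)) : f x ∈ T := by
  induction x using DirectSum.induction_on with
  | zero => simp
  | of i y => exact hT i ⟨y, rfl⟩
  | add a b ha hb => rw [map_add]; exact T.add_mem ha hb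

lemma closedExt_leftPerp (X : Set (ModuleCat.{v} R)) : ClosedUnderExt (leftPerp X) := by
  intro Y U hU hQ Z' hZ' f
  have h1 : f ∘ₗ U.subtype = 0 := hU Z' hZ' (f ∘ₗ U.subtype)
  have hker : U ≤ LinearMap.ker f := by
    intro x hx
    have := congrArg (fun g : ↥U →ₗ[R] ↥Z' => g ⟨x, hx⟩) h1
    simpa using this
  have h2 : U.liftQ f hker = 0 := hQ Z' hZ' (U.liftQ f hker)
  ext x
  have : f x = U.liftQ f hker (U.mkQ x) := (Submodule.liftQ_apply U f x).symm
  rw [this, h2]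
  simp

lemma genBy_subset_lr (Z : Set (ModuleCat.{v} R)) :
    genBy Z ⊆ leftPerp (rightPerp Z) := by
  rintro M ⟨ι, N, hN, g, hg⟩ W hW f
  classical
  have hcomp : ∀ i, f ∘ₗ (g ∘ₗ DirectSum.lof R ι (fun i => ↥(N i)) i) = 0 := fun i =>
    hW (N i) (hN i) _
  ext x
  obtain ⟨y, rfl⟩ := hg x
  have : (f ∘ₗ g) y ∈ (⊥ : Submodule R ↥W) := by
    refine apply_mem_of_comp_range_le (f ∘ₗ g) ⊥ (fun i => ?_) y
    rw [LinearMap.comp_assoc, hcomp i]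
    simp
  simpa using this

/-- Lemma 3 (first part): `g(Z) = lr(Z)` if and only if `g(Z)` is closed under
extensions. -/
theorem stmt_5 {R : Type u} [Ring R] (Z : Set (ModuleCat.{v} R)) :
    genBy Z = leftPerp (rightPerp Z) ↔ ClosedUnderExt (genBy Z) := by
  constructor
  · intro h; rw [h]; exact closedExt_leftPerp _
  · intro hext
    refine Set.Subset.antisymm (genBy_subset_lr Z) ?_
    intro M hM
    classical
    set S := {p : Submodule R ↥M | ∃ Z' ∈ Z, ∃ f : ↥Z' →ₗ[R] ↥M, LinearMap.range f = p}
      with hS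
    choose Zc hZc fc hfc using fun p : S => p.2
    let F : (DirectSum S fun p => ↥(Zc p)) →ₗ[R] ↥M := DirectSum.toModule R S ↥M fc
    set T : Submodule R ↥M := LinearMap.range F with hT
    -- each member of S is contained in T
    have hpT : ∀ p : S, p.val ≤ T := by
      rintro p x hx
      rw [← hfc p] at hx
      obtain ⟨y, rfl⟩ := hx
      exact ⟨DirectSum.lof R S (fun p => ↥(Zc p)) p y, by simp [F, DirectSum.toModule_lof]⟩
    have hTgen : ModuleCat.of R ↥T ∈ genBy Z :=
      ⟨S, Zc, hZc, F.rangeRestrict, F.surjective_rangeRestrict⟩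
    -- any submodule in genBy Z is contained in T
    have hVT : ∀ V : Submodule R ↥M, ModuleCat.of R ↥V ∈ genBy Z → V ≤ T := by
      rintro V ⟨ι, N, hN, g, hg⟩ x hx
      obtain ⟨y, hy⟩ := hg ⟨x, hx⟩
      have hm : (V.subtype ∘ₗ g) y ∈ T := by
        refine apply_mem_of_comp_range_le (V.subtype ∘ₗ g) T (fun i => ?_) y
        have hmemS : LinearMap.range ((V.subtype ∘ₗ g) ∘ₗ DirectSum.lof R ι
            (fun i => ↥(N i)) i) ∈ S :=
          ⟨N i, hN i, _, rfl⟩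
        exact hpT ⟨_, hmemS⟩
      have hxy : (V.subtype ∘ₗ g) y = x := by
        show V.subtype (g y) = x
        rw [show g y = (⟨x, hx⟩ : ↥V) from hy]
        rfl
      exact hxy ▸ hm
    -- M ⧸ T is in the right perp of Z
    have hQ : ModuleCat.of R (↥M ⧸ T) ∈ rightPerp Z := by
      intro Z' hZ' g
      set Uu : Submodule R (↥M ⧸ T) := LinearMap.range g with hUu
      set V : Submodule R ↥M := Uu.comap T.mkQ with hV
      have hTV : T ≤ V := by
        intro t ht
        show T.mkQ t ∈ Uu
        have : T.mkQ t = 0 := by simpa [Submodule.Quotient.mk_eq_zero] using ht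
        rw [this]; exact Uu.zero_mem
      let π : ↥V →ₗ[R] (↥M ⧸ T) := T.mkQ ∘ₗ V.subtype
      have hkerπ : LinearMap.ker π = T.comap V.subtype := by
        ext v
        simp [π, Submodule.Quotient.mk_eq_zero]
      have hrangeπ : LinearMap.range π = Uu := by
        rw [LinearMap.range_comp, Submodule.range_subtype, hV, Submodule.map_comap_eq,
          Submodule.range_mkQ, top_inf_eq]
      -- kernel of π lies in genBy Z
      have eker : ↥(LinearMap.ker π) ≃ₗ[R] ↥T :=
        (LinearEquiv.ofEq _ _ hkerπ).trans (Submodule.comapSubtypeEquivOfLe hTV)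
      have hkergen : ModuleCat.of R ↥(LinearMap.ker π) ∈ genBy Z :=
        mem_genBy_of_surjective hTgen eker.symm.toLinearMap eker.symm.surjective
      -- the quotient lies in genBy Z
      have hUgen : ModuleCat.of R ↥Uu ∈ genBy Z :=
        mem_genBy_of_surjective (mem_genBy_self hZ') g.rangeRestrict
          g.surjective_rangeRestrict
      have equot : (↥V ⧸ LinearMap.ker π) ≃ₗ[R] ↥Uu :=
        π.quotKerEquivRange.trans (LinearEquiv.ofEq _ _ hrangeπ)
      have hquotgen : ModuleCat.of R (↥V ⧸ LinearMap.ker π) ∈ genBy Z :=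
        mem_genBy_of_surjective hUgen equot.symm.toLinearMap equot.symm.surjective
      -- extension closedness gives V ∈ genBy Z
      have hVgen : ModuleCat.of R ↥V ∈ genBy Z :=
        hext (ModuleCat.of R ↥V) (LinearMap.ker π) hkergen hquotgen
      have hVleT : V ≤ T := hVT V hVgen
      have hU0 : Uu = ⊥ := by
        rw [← hrangeπ, eq_bot_iff]
        rintro u hu
        obtain ⟨v, rfl⟩ := hu
        have : (v : ↥M) ∈ T := hVleT v.2
        show π v ∈ (⊥ : Submodule R (↥M ⧸ T))
        simp [π, Submodule.Quotient.mk_eq_zero, this]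
      ext x
      have hx : g x ∈ Uu := ⟨x, rfl⟩
      rw [hU0] at hx
      simpa using hx
    -- conclude
    have h0 : T.mkQ = 0 := hM (ModuleCat.of R (↥M ⧸ T)) hQ T.mkQ
    have hTtop : T = ⊤ := by
      rw [← Submodule.ker_mkQ T, h0, LinearMap.ker_zero]
    exact ⟨S, Zc, hZc, F, by rw [← LinearMap.range_eq_top, ← hT, hTtop]⟩
end

section
/- Let R be a ring and Z a class of R-modules. Then c(Z) = rl(Z) if and only if c(Z) is closed under extensions; i.e., the class of modules cogenerated by Z equals the smallest torsionfree class containing Z if and only if the class of modules cogenerated by Z is closed under extensions. -/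
universe u v

/-- `c(Z)`: the class of modules cogenerated by `Z`, i.e. submodules of
products of modules in `Z`. -/
def cogenBy {R : Type u} [Ring R] (Z : Set (ModuleCat.{v} R)) : Set (ModuleCat.{v} R) :=
  {M | ∃ (ι : Type v) (N : ι → ModuleCat.{v} R), (∀ i, N i ∈ Z) ∧
    ∃ f : M →ₗ[R] (∀ i, ↥(N i)), Function.Injective f}

section Aux

variable {R : Type u} [Ring R] {Z : Set (ModuleCat.{v} R)}

lemma mem_cogenBy_single {A : Type v} [AddCommGroup A] [Module R A]
    {Z₀ : ModuleCat.{v} R} (hZ₀ : Z₀ ∈ Z) (h : A →ₗ[R] Z₀)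
    (hinj : Function.Injective h) : ModuleCat.of R A ∈ cogenBy Z := by
  refine ⟨PUnit.{v+1}, fun _ => Z₀, fun _ => hZ₀, LinearMap.pi fun _ => h, ?_⟩
  intro a b hab
  exact hinj (congrFun hab PUnit.unit)

lemma rightPerp_closedUnderExt (X : Set (ModuleCat.{v} R)) :
    ClosedUnderExt (rightPerp X) := by
  intro Y U hU hQ Z' hZ' f
  have h1 : U.mkQ ∘ₗ f = 0 := hQ Z' hZ' (U.mkQ ∘ₗ f)
  have h2 : ∀ z, f z ∈ U := by
    intro z
    have h := LinearMap.congr_fun h1 z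
    simpa [Submodule.Quotient.mk_eq_zero] using h
  have h3 := hU Z' hZ' (f.codRestrict U h2)
  ext z
  have h4 := LinearMap.congr_fun h3 z
  have h5 := congrArg Subtype.val h4
  simpa using h5

lemma cogenBy_subset_rl : cogenBy Z ⊆ rightPerp (leftPerp Z) := by
  rintro M ⟨ι, N, hN, e, he⟩ X hX f
  ext x
  have h0 : e (f x) = 0 := by
    funext i
    have h := hX (N i) (hN i) ((LinearMap.proj i) ∘ₗ e ∘ₗ f)
    have h' := LinearMap.congr_fun h x
    simpa using h'
  have : f x = 0 := he (by rw [h0, map_zero])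
  simpa using this

lemma rl_subset_cogenBy (hext : ClosedUnderExt (cogenBy Z)) :
    rightPerp (leftPerp Z) ⊆ cogenBy Z := by
  intro M hM
  set S : Set (Submodule R ↥M) :=
    {K | ∃ Z' ∈ Z, ∃ f : ↥M →ₗ[R] ↥Z', LinearMap.ker f = K} with hS
  have hch : ∀ K : S, ∃ Z' ∈ Z, ∃ f : ↥M →ₗ[R] ↥Z',
      LinearMap.ker f = (K : Submodule R ↥M) := fun K => K.2
  choose N hNZ f hf using hch
  set t : Submodule R ↥M := sInf S with ht
  have hkerF : LinearMap.ker (LinearMap.pi f) = t := by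
    rw [LinearMap.ker_pi]
    simp only [hf]
    rw [ht, sInf_eq_iInf']
  have htl : ModuleCat.of R ↥t ∈ leftPerp Z := by
    intro Z₀ hZ₀ g
    set K' : Submodule R ↥M := (LinearMap.ker g).map t.subtype with hK'
    have hK't : K' ≤ t := Submodule.map_subtype_le _ _
    set t' : Submodule R (↥M ⧸ K') := t.map K'.mkQ with ht'
    -- φ : t →ₗ t', surjective with kernel = ker g
    have hφmem : ∀ x : ↥t, (K'.mkQ ∘ₗ t.subtype) x ∈ t' :=
      fun x => ⟨(x : ↥M), x.2, rfl⟩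
    set φ : ↥t →ₗ[R] ↥t' := (K'.mkQ ∘ₗ t.subtype).codRestrict t' hφmem with hφ
    have hφsurj : Function.Surjective φ := by
      rintro ⟨y, hy⟩
      obtain ⟨x, hx, rfl⟩ := hy
      exact ⟨⟨x, hx⟩, rfl⟩
    have hφker : LinearMap.ker φ = LinearMap.ker g := by
      ext x
      constructor
      · intro hx
        have hx' : K'.mkQ (x : ↥M) = 0 := congrArg Subtype.val hx
        have hxK' : (x : ↥M) ∈ K' := (Submodule.Quotient.mk_eq_zero _).mp hx'
        obtain ⟨v, hv, hvx⟩ := hxK'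
        have : v = x := Subtype.ext hvx
        exact this ▸ hv
      · intro hx
        have hxK' : (x : ↥M) ∈ K' := ⟨x, hx, rfl⟩
        have : K'.mkQ (x : ↥M) = 0 := (Submodule.Quotient.mk_eq_zero _).mpr hxK'
        exact Subtype.ext this
    have E := φ.quotKerEquivOfSurjective hφsurj
    have hliftinj :
        Function.Injective ((LinearMap.ker φ).liftQ g (le_of_eq hφker)) := by
      rw [← LinearMap.ker_eq_bot]
      exact Submodule.ker_liftQ_eq_bot _ _ _ (le_of_eq hφker.symm)
    have ht'C : ModuleCat.of R ↥t' ∈ cogenBy Z :=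
      mem_cogenBy_single hZ₀
        (((LinearMap.ker φ).liftQ g (le_of_eq hφker)) ∘ₗ
          (E.symm : ↥t' →ₗ[R] (↥t ⧸ LinearMap.ker φ)))
        (hliftinj.comp E.symm.injective)
    -- the quotient (M/K')/t' embeds in the product
    have hK'ker : K' ≤ LinearMap.ker (LinearMap.pi f) := hkerF ▸ hK't
    set G : (↥M ⧸ K') →ₗ[R] ∀ K : S, ↥(N K) := K'.liftQ (LinearMap.pi f) hK'ker
      with hG
    have hkerG : LinearMap.ker G = t' := by
      rw [hG, Submodule.ker_liftQ, hkerF]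
    have hQC : ModuleCat.of R ((↥M ⧸ K') ⧸ t') ∈ cogenBy Z := by
      refine ⟨S, fun K => N K, fun K => hNZ K,
        t'.liftQ G (le_of_eq hkerG.symm), ?_⟩
      rw [← LinearMap.ker_eq_bot]
      exact Submodule.ker_liftQ_eq_bot _ _ _ (le_of_eq hkerG)
    have hYC : ModuleCat.of R (↥M ⧸ K') ∈ cogenBy Z :=
      hext (ModuleCat.of R (↥M ⧸ K')) t' ht'C hQC
    obtain ⟨ι', N', hN', e, he⟩ := hYC
    have hle : t ≤ K' := by
      intro x hx
      have hxk : ∀ i, ((LinearMap.proj i) ∘ₗ e ∘ₗ K'.mkQ) x = 0 := by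
        intro i
        have hmem : LinearMap.ker ((LinearMap.proj i) ∘ₗ e ∘ₗ K'.mkQ) ∈ S :=
          ⟨N' i, hN' i, _, rfl⟩
        exact (sInf_le hmem : t ≤ _) hx
      have h0 : e (K'.mkQ x) = 0 := by
        funext i
        have := hxk i
        simpa using this
      have h1 : K'.mkQ x = 0 := he (by rw [h0, map_zero])
      exact (Submodule.Quotient.mk_eq_zero _).mp h1
    ext u
    have huK' : (show ↥t from u).1 ∈ K' := hle (show ↥t from u).2
    obtain ⟨v, hv, hvu⟩ := huK'
    have hvu' : v = (show ↥t from u) := Subtype.ext hvu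
    have hv' : (show ↥t from u) ∈ LinearMap.ker g := hvu' ▸ hv
    simpa using hv'
  -- t = ⊥ since t ∈ l(Z) and M ∈ rl(Z)
  have ht0 : t = ⊥ := by
    have h0 := hM (ModuleCat.of R ↥t) htl t.subtype
    rw [eq_bot_iff]
    intro x hx
    have := LinearMap.congr_fun h0 ⟨x, hx⟩
    simpa using this
  exact ⟨S, fun K => N K, fun K => hNZ K, LinearMap.pi f, by
    rw [← LinearMap.ker_eq_bot, hkerF, ht0]⟩

end Aux

/-- Lemma 3 (second part): `c(Z) = rl(Z)` if and only if `c(Z)` is closed under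
extensions. -/
theorem stmt_6 {R : Type u} [Ring R] (Z : Set (ModuleCat.{v} R)) :
    cogenBy Z = rightPerp (leftPerp Z) ↔ ClosedUnderExt (cogenBy Z) := by
  constructor
  · intro h
    rw [h]
    exact rightPerp_closedUnderExt _
  · intro h
    exact Set.Subset.antisymm cogenBy_subset_rl (rl_subset_cogenBy h)
end

section
/- Let Λ be an artin algebra, M a finitely generated Λ-module, and f: M → Y a left minimal map where Y = ⊕_{i∈I} Y_i is a direct sum of non-zero modules. Then the index set I is finite. -/
/-!
The images under `f` of finitely many generators of `M` have finite supports in `⨁ i, Y i`, so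
`f` lands in the finite subsum over the union `S` of these supports. The projection onto that subsum
fixes `f`, hence is bijective by minimality, whereas it kills every nonzero `Y i` with `i ∉ S`.
-/

universe u v

namespace DFinsupp

variable {R ι : Type*} [Semiring R] {Y : ι → Type*} [∀ i, AddCommMonoid (Y i)]
  [∀ i, Module R (Y i)]

theorem filter_eq_self {p : ι → Prop} [DecidablePred p] {x : Π₀ i, Y i}
    (h : ∀ i, x i ≠ 0 → p i) : x.filter p = x :=
  ext fun i => by
    by_cases hi : p i
    · exact filter_apply_pos x hi
    · rw [filter_apply_neg x hi, eq_comm]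
      exact not_not.mp (mt (h i) hi)

theorem of_filterLinearMap_injective {p : ι → Prop} [DecidablePred p]
    (hinj : Function.Injective (filterLinearMap R Y p)) (i : ι) [Nontrivial (Y i)] : p i := by
  classical
  by_contra hi
  obtain ⟨y, hy⟩ := exists_ne (0 : Y i)
  have hkill : filterLinearMap R Y p (single i y) = filterLinearMap R Y p 0 := by
    rw [filterLinearMap_apply, filter_single_neg i y hi, map_zero]
  exact hy (single_eq_zero.mp (hinj hkill))

end DFinsupp

theorem LinearMap.exists_filterLinearMap_comp_eq {R M ι : Type*} [Semiring R] [AddCommMonoid M]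
    [Module R M] [Module.Finite R M] {Y : ι → Type*} [∀ i, AddCommMonoid (Y i)]
    [∀ i, Module R (Y i)] [DecidableEq ι] (f : M →ₗ[R] Π₀ i, Y i) :
    ∃ S : Finset ι, DFinsupp.filterLinearMap R Y (· ∈ S) ∘ₗ f = f := by
  classical
  obtain ⟨s, hs⟩ := Module.Finite.fg_top (R := R) (M := M)
  refine ⟨s.sup fun x => (f x).support, LinearMap.ext_on hs fun x hx => ?_⟩
  exact DFinsupp.filter_eq_self fun i hi =>
    Finset.le_sup (f := fun x => (f x).support) hx (DFinsupp.mem_support_iff.mpr hi)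

theorem stmt_13_general {Λ : Type u} [Ring Λ] {I : Type v} (Y : I → ModuleCat.{v} Λ)
    (hY : ∀ i, Nontrivial ↥(Y i))
    (M : ModuleCat.{v} Λ) (hM : Module.Finite Λ ↥M)
    (f : ↥M →ₗ[Λ] DirectSum I fun i => ↥(Y i))
    (hmin : ∀ g : (DirectSum I fun i => ↥(Y i)) →ₗ[Λ] DirectSum I fun i => ↥(Y i),
      g.comp f = f → Function.Bijective g) :
    Finite I := by
  classical
  obtain ⟨S, hS⟩ := f.exists_filterLinearMap_comp_eq
  have hmem (i : I) : i ∈ S :=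
    have := hY i
    DFinsupp.of_filterLinearMap_injective (hmin _ hS).injective i
  exact Set.finite_univ_iff.mp (S.finite_toSet.subset fun i _ => hmem i)

/-- Let `Λ` be an artin algebra (a finite dimensional algebra over a field), `M` a
finitely generated `Λ`-module and `f : M → ⨁_{i ∈ I} Y_i` a left minimal map (every
endomorphism `g` of the target with `g ∘ f = f` is an automorphism) into a direct sum
of non-zero modules `Y_i`. Then the index set `I` is finite. -/
theorem stmt_13 {k : Type u} [Field k] {Λ : Type u} [Ring Λ] [Algebra k Λ]
    [FiniteDimensional k Λ] {I : Type v} (Y : I → ModuleCat.{v} Λ)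
    (hY : ∀ i, Nontrivial ↥(Y i))
    (M : ModuleCat.{v} Λ) (hM : Module.Finite Λ ↥M)
    (f : ↥M →ₗ[Λ] DirectSum I fun i => ↥(Y i))
    (hmin : ∀ g : (DirectSum I fun i => ↥(Y i)) →ₗ[Λ] DirectSum I fun i => ↥(Y i),
      g.comp f = f → Function.Bijective g) :
    Finite I :=
  stmt_13_general Y hY M hM f hmin
end
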